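/- Fix an integer n ≥ 1 and integers ℓ, m with 0 ≤ m ≤ ℓ and 2ℓ ≤ n. Then c(w_ℓ) + c(w_{n−ℓ}) − c(w_m + w_{n−m}) = (ℓ − m)(n − ℓ − m) + (ℓ − m) − ℓ²/n. (This is the equivariant degree shift C_m of the perverse braiding equivalence in the stratified Mukai flop example, in the conformal-field-theory normalization of the central charge.) -/

import Mathlib

open RealInnerProductSpace

/-- The `a`-th fundamental weight of `sl_n`:
`w_a = (∑_{i=1}^{a} e_i) − (a/n)·(∑_{i=1}^{n} e_i)`. -/
noncomputable def fundWeight (n a : ℕ) : EuclideanSpace ℝ (Fin n) :=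
  (WithLp.equiv 2 (Fin n → ℝ)).symm
    (fun i => (if (i : ℕ) + 1 ≤ a then (1 : ℝ) else 0) - (a : ℝ) / (n : ℝ))

/-- The Weyl vector `ρ = ∑_{i=1}^{n} ((n+1)/2 − i)·e_i`. -/
noncomputable def weylVector (n : ℕ) : EuclideanSpace ℝ (Fin n) :=
  (WithLp.equiv 2 (Fin n → ℝ)).symm
    (fun i => ((n : ℝ) + 1) / 2 - (((i : ℕ) : ℝ) + 1))

/-- The classical dimension `d(μ) = ⟨μ, ρ⟩`. -/
noncomputable def classicalDim (n : ℕ) (μ : EuclideanSpace ℝ (Fin n)) : ℝ :=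
  ⟪μ, weylVector n⟫

/-- The conformal-dimension prefactor `c(μ) = (1/2)·⟨μ, μ + 2ρ⟩`. -/
noncomputable def confDim (n : ℕ) (μ : EuclideanSpace ℝ (Fin n)) : ℝ :=
  (1 / 2) * ⟪μ, μ + (2 : ℝ) • weylVector n⟫

/-!
Writing `w_a = 𝟙_{[1,a]} − (a/n)·𝟙`, pairing `w_a` with a vector `v` gives the partial sum
`v_1 + ⋯ + v_a` minus `a/n` times the full sum. Hence `⟪w_a, w_b⟫ = min a b − ab/n` and, as the
coordinates of `ρ` sum to zero, `⟪w_a, ρ⟫ = a(n−a)/2`; so `c(w_a) = a(n−a)(n+1)/(2n)`. Since `c`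
is quadratic with polar form `⟪·,·⟫`, `c(w_m + w_{n−m}) = c(w_m) + c(w_{n−m}) + ⟪w_m, w_{n−m}⟫`,
and the identity becomes a rational-function identity in `n, ℓ, m`.
-/

open Finset

section

variable {n : ℕ}

lemma filter_range_succ_le (k b : ℕ) : {i ∈ range k | i + 1 ≤ b} = range (min k b) := by
  ext i
  simp only [mem_filter, mem_range, Nat.lt_min]
  omega

lemma inner_fundWeight_left {a : ℕ} (ha : a ≤ n) (f : ℕ → ℝ) :
    ⟪fundWeight n a, (WithLp.equiv 2 (Fin n → ℝ)).symm (fun i => f i)⟫ =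
      ∑ i ∈ range a, f i - a / n * ∑ i ∈ range n, f i := by
  simp only [fundWeight, PiLp.inner_apply, RCLike.inner_apply', conj_trivial,
    WithLp.equiv_symm_apply]
  rw [Fin.sum_univ_eq_sum_range (fun i => ((if i + 1 ≤ a then (1 : ℝ) else 0) - a / n) * f i)]
  simp only [sub_mul, ite_mul, one_mul, zero_mul, sum_sub_distrib, ← mul_sum, sum_ite,
    sum_const_zero, add_zero, filter_range_succ_le, min_eq_right ha]

lemma sum_range_fundWeight_coord (k b : ℕ) :
    ∑ i ∈ range k, ((if i + 1 ≤ b then (1 : ℝ) else 0) - b / n) = min k b - k * b / n := by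
  rw [sum_sub_distrib, sum_boole, filter_range_succ_le, card_range, sum_const, card_range,
    nsmul_eq_mul]
  push_cast
  ring

lemma sum_range_weylVector_coord (k : ℕ) :
    ∑ i ∈ range k, (((n : ℝ) + 1) / 2 - ((i : ℝ) + 1)) = k * (n - k) / 2 := by
  induction k with
  | zero => simp
  | succ k ih => rw [sum_range_succ, ih]; push_cast; ring

lemma inner_fundWeight_weylVector {a : ℕ} (ha : a ≤ n) :
    ⟪fundWeight n a, weylVector n⟫ = a * (n - a) / 2 := by
  refine (inner_fundWeight_left ha fun i => ((n : ℝ) + 1) / 2 - ((i : ℝ) + 1)).trans ?_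
  rw [sum_range_weylVector_coord, sum_range_weylVector_coord]
  ring

lemma inner_fundWeight_fundWeight (hn : n ≠ 0) {a b : ℕ} (ha : a ≤ n) (hb : b ≤ n) :
    ⟪fundWeight n a, fundWeight n b⟫ = min a b - a * b / n := by
  refine (inner_fundWeight_left ha fun i => (if i + 1 ≤ b then (1 : ℝ) else 0) - b / n).trans ?_
  rw [sum_range_fundWeight_coord, sum_range_fundWeight_coord, min_eq_right hb]
  field_simp
  ring

lemma confDim_eq (μ : EuclideanSpace ℝ (Fin n)) :
    confDim n μ = ⟪μ, μ⟫ / 2 + ⟪μ, weylVector n⟫ := by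
  rw [confDim, inner_add_right, real_inner_smul_right]
  ring

lemma confDim_add (μ ν : EuclideanSpace ℝ (Fin n)) :
    confDim n (μ + ν) = confDim n μ + confDim n ν + ⟪μ, ν⟫ := by
  simp only [confDim_eq, inner_add_left, inner_add_right, real_inner_comm ν μ]
  ring

lemma confDim_fundWeight {a : ℕ} (hn : n ≠ 0) (ha : a ≤ n) :
    confDim n (fundWeight n a) = a * (n - a) * (n + 1) / (2 * n) := by
  rw [confDim_eq, inner_fundWeight_fundWeight hn ha ha, inner_fundWeight_weylVector ha, min_self]
  field_simp
  ring

end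

/-- `c(w_ℓ) + c(w_{n−ℓ}) − c(w_m + w_{n−m}) = (ℓ − m)(n − ℓ − m) + (ℓ − m) − ℓ²/n`. -/
theorem stmt1 (n ℓ m : ℕ) (hn : 1 ≤ n) (hm : m ≤ ℓ) (hℓ : 2 * ℓ ≤ n) :
    confDim n (fundWeight n ℓ) + confDim n (fundWeight n (n - ℓ)) -
        confDim n (fundWeight n m + fundWeight n (n - m)) =
      ((ℓ : ℝ) - (m : ℝ)) * ((n : ℝ) - (ℓ : ℝ) - (m : ℝ)) + ((ℓ : ℝ) - (m : ℝ)) -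
        (ℓ : ℝ) ^ 2 / (n : ℝ) := by
  have hn0 : n ≠ 0 := by omega
  have hℓn : ℓ ≤ n := by omega
  have hmn : m ≤ n := by omega
  rw [confDim_add, confDim_fundWeight hn0 hℓn, confDim_fundWeight hn0 (n.sub_le ℓ),
    confDim_fundWeight hn0 hmn, confDim_fundWeight hn0 (n.sub_le m),
    inner_fundWeight_fundWeight hn0 hmn (n.sub_le m), min_eq_left (by omega : m ≤ n - m)]
  push_cast [Nat.cast_sub hℓn, Nat.cast_sub hmn]
  field_simp
  ring
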